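/- arXiv:2309.17124 — 2 statements merged into one kernel-verified Lean document; each statement's English description precedes it below -/
import Mathlib

section
/- Let F be a finite field, m a natural number, and v : Fin m → F a vector that is neither identically zero nor a standard unit vector (i.e., there is no k with v k = 1 and v j = 0 for j ≠ k). Then the number of pairs (r, s) with r, s : Fin m → F satisfying ∑_{j} r j * s j * v j = (∑_{j} r j * v j) * (∑_{j} s j * v j) is at most 2 * |F|^(2m − 1). Equivalently, for uniformly random r and s the sketch check passes with probability at most 2/|F|. -/
/-!
The polynomial `Q(r, s) = ∑ v_j r_j s_j - (∑ v_j r_j) (∑ v_j s_j)` in `2m` variables is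
homogeneous of degree 2, and at pairs of standard basis vectors it takes the values
`Q(e_i, e_j) = δ_ij v_i - v_i v_j`. These all vanish only if `v` is zero or a standard unit
vector, so otherwise `Q ≠ 0` and the Schwartz–Zippel lemma bounds its zeros by `2 |F|^(2m - 1)`.
-/

open Finset

namespace MvPolynomial

variable {σ R : Type*} [Fintype σ] [DecidableEq σ] [CommRing R] [IsDomain R] [Fintype R]
  [DecidableEq R]

theorem card_eval_eq_zero_mul_card_le {p : MvPolynomial σ R} (hp : p ≠ 0) :
    #{x : σ → R | eval x p = 0} * Fintype.card R
      ≤ p.totalDegree * Fintype.card R ^ Fintype.card σ := by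
  let e := Fintype.equivFin σ
  have hSZ := schwartz_zippel_totalDegree
    ((map_ne_zero_iff _ (renameEquiv R e).injective).mpr hp) (univ : Finset R)
  rw [totalDegree_renameEquiv, Fintype.piFinset_univ] at hSZ
  have hcount : #{x : Fin (Fintype.card σ) → R | eval x (renameEquiv R e p) = 0}
      = #{x : σ → R | eval x p = 0} :=
    (card_equiv (e.arrowCongr (Equiv.refl R)) (by simp [eval_rename, Function.comp_def])).symm
  have hR : (0 : ℚ≥0) < Fintype.card R := by exact_mod_cast Fintype.card_pos
  rw [hcount, card_univ, div_le_div_iff₀ (by positivity) hR] at hSZ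
  exact_mod_cast hSZ

end MvPolynomial

open MvPolynomial

section SketchCheck

variable {R : Type*} [CommRing R] {m : ℕ}

noncomputable def sketchPoly (v : Fin m → R) : MvPolynomial (Fin m ⊕ Fin m) R :=
  ∑ j, C (v j) * X (.inl j) * X (.inr j)
    - (∑ j, C (v j) * X (.inl j)) * ∑ j, C (v j) * X (.inr j)

theorem eval_sketchPoly (v r s : Fin m → R) :
    eval (Sum.elim r s) (sketchPoly v)
      = ∑ j, r j * s j * v j - (∑ j, r j * v j) * ∑ j, s j * v j := by
  simp only [sketchPoly, map_sub, map_mul, map_sum, eval_C, eval_X, Sum.elim_inl, Sum.elim_inr]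
  congr 1
  · exact sum_congr rfl fun j _ => by ring
  · congr 1 <;> exact sum_congr rfl fun j _ => by ring

theorem isHomogeneous_sketchPoly (v : Fin m → R) : (sketchPoly v).IsHomogeneous 2 := by
  have hC : ∀ j, (C (v j) : MvPolynomial (Fin m ⊕ Fin m) R).IsHomogeneous 0 :=
    fun j => isHomogeneous_C _ _
  have hCX : ∀ j i, (C (v j) * X i : MvPolynomial (Fin m ⊕ Fin m) R).IsHomogeneous 1 :=
    fun j i => (hC j).mul (isHomogeneous_X _ _)
  exact .sub (.sum _ _ _ fun j _ => (hCX j _).mul (isHomogeneous_X _ _))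
    ((IsHomogeneous.sum _ _ _ fun j _ => hCX j _).mul (.sum _ _ _ fun j _ => hCX j _))

theorem eval_sketchPoly_single (v : Fin m → R) (i j : Fin m) :
    eval (Sum.elim (Pi.single i 1) (Pi.single j 1)) (sketchPoly v)
      = (if i = j then v i else 0) - v i * v j := by
  rw [eval_sketchPoly]
  split_ifs with h
  · subst h; simp [Pi.single_apply]
  · simp [Pi.single_apply, Ne.symm h]

theorem sketchPoly_ne_zero [IsDomain R] {v : Fin m → R} (hv0 : ¬ ∀ j, v j = 0)
    (hv1 : ¬ ∃ k, v k = 1 ∧ ∀ j, j ≠ k → v j = 0) : sketchPoly v ≠ 0 := by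
  intro hQ
  have hvanish : ∀ i j, (if i = j then v i else 0) = v i * v j := fun i j => by
    rw [← sub_eq_zero, ← eval_sketchPoly_single, hQ, map_zero]
  obtain ⟨k, hk⟩ := not_forall.mp hv0
  have hk1 : v k = 1 := by
    have hsq := hvanish k k
    rw [if_pos rfl] at hsq
    exact mul_left_cancel₀ hk (hsq.symm.trans (mul_one _).symm)
  refine hv1 ⟨k, hk1, fun j hj => ?_⟩
  simpa [hj.symm, hk1, eq_comm] using hvanish k j

end SketchCheck

theorem sketch_check_sound (F : Type*) [Field F] [Fintype F] [DecidableEq F]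
    (m : ℕ) (v : Fin m → F)
    (hv0 : ¬ (∀ j, v j = 0))
    (hv1 : ¬ ∃ k, v k = 1 ∧ ∀ j, j ≠ k → v j = 0) :
    (Finset.univ.filter (fun p : (Fin m → F) × (Fin m → F) =>
        ∑ j, p.1 j * p.2 j * v j = (∑ j, p.1 j * v j) * (∑ j, p.2 j * v j))).card
      ≤ 2 * Fintype.card F ^ (2 * m - 1) := by
  obtain ⟨k, -⟩ := not_forall.mp hv0
  refine Nat.le_of_mul_le_mul_right ?_ (Fintype.card_pos (α := F))
  rw [mul_assoc, ← pow_succ, Nat.sub_add_cancel (by have := k.pos; omega)]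
  calc _ = #{x : Fin m ⊕ Fin m → F | eval x (sketchPoly v) = 0} * Fintype.card F := by
        congr 1
        refine card_equiv (Equiv.sumArrowEquivProdArrow _ _ _).symm fun p => ?_
        simp [Equiv.sumArrowEquivProdArrow, eval_sketchPoly, sub_eq_zero]
    _ ≤ (sketchPoly v).totalDegree * Fintype.card F ^ (m + m) := by
        simpa using card_eval_eq_zero_mul_card_le (sketchPoly_ne_zero hv0 hv1)
    _ ≤ 2 * Fintype.card F ^ (2 * m) := by
        rw [← two_mul]; gcongr; exact (isHomogeneous_sketchPoly v).totalDegree_le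
end

section
/- Let F be a finite field and m ≥ 1 a natural number. Let e, e' : Fin m → F be error vectors that are not both identically zero. Then the number of pairs (α, ρ), where α ∈ F and ρ : Fin m → {a : F // a ≠ 0}, satisfying ∑_{j} (ρ j) * (e' j − α * e j) = 0 is at most (|F| − 1)^m + |F| * (|F| − 1)^(m − 1). Equivalently, for a uniformly random MAC key α ∈ F and uniformly random nonzero coefficients ρ_j ∈ F \ {0}, the batch MAC check passes despite the errors with probability at most 1/|F| + 1/(|F| − 1). -/
open Finset

/-- Auxiliary: if some coefficient `c j0` is nonzero, at most `(q-1)^(m-1)` nonzero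
vectors `ρ` satisfy `∑ ρ j * c j = 0`. -/
lemma mac_auxA {F : Type*} [Field F] [Fintype F] [DecidableEq F] {m : ℕ}
    (c : Fin m → F) (j0 : Fin m) (hc : c j0 ≠ 0) :
    (Finset.univ.filter (fun ρ : Fin m → {a : F // a ≠ 0} =>
      ∑ j, (ρ j : F) * c j = 0)).card ≤ (Fintype.card F - 1) ^ (m - 1) := by
  have hcard : Fintype.card ({j : Fin m // j ≠ j0} → {a : F // a ≠ 0})
      = (Fintype.card F - 1) ^ (m - 1) := by
    rw [Fintype.card_fun]
    congr 1
    · rw [Fintype.card_subtype_compl, Fintype.card_subtype_eq]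
    · rw [Fintype.card_subtype_compl, Fintype.card_subtype_eq, Fintype.card_fin]
  refine le_trans (Finset.card_le_card_of_injOn
    (fun (ρ : Fin m → {a : F // a ≠ 0}) (j : {j : Fin m // j ≠ j0}) => ρ j.1)
    (fun _ _ => Finset.mem_univ _) ?_)
    (le_of_eq (by rw [Finset.card_univ, hcard]))
  intro ρ hρ ρ' hρ' hagree
  simp only [Finset.mem_coe, Finset.mem_filter] at hρ hρ'
  have hoff : ∀ j : Fin m, j ≠ j0 → ρ j = ρ' j := by
    intro j hj
    exact congrFun hagree ⟨j, hj⟩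
  have herase : ∑ j ∈ Finset.univ.erase j0, (ρ j : F) * c j
      = ∑ j ∈ Finset.univ.erase j0, (ρ' j : F) * c j := by
    refine Finset.sum_congr rfl (fun j hj => ?_)
    rw [hoff j (Finset.ne_of_mem_erase hj)]
  have h1 := Finset.add_sum_erase Finset.univ (fun j => (ρ j : F) * c j) (Finset.mem_univ j0)
  have h2 := Finset.add_sum_erase Finset.univ (fun j => (ρ' j : F) * c j) (Finset.mem_univ j0)
  have hj0 : (ρ j0 : F) * c j0 = (ρ' j0 : F) * c j0 := by
    have := hρ.2
    have := hρ'.2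
    rw [hρ.2] at h1
    rw [hρ'.2] at h2
    rw [herase] at h1
    linear_combination h1 - h2
  have hj0' : ρ j0 = ρ' j0 := Subtype.ext (mul_right_cancel₀ hc hj0)
  funext j
  by_cases hj : j = j0
  · rw [hj]; exact hj0'
  · exact hoff j hj

theorem mac_check_sound (F : Type*) [Field F] [Fintype F] [DecidableEq F]
    (m : ℕ) (hm : 1 ≤ m) (e e' : Fin m → F)
    (h : ¬ ((∀ j, e j = 0) ∧ (∀ j, e' j = 0))) :
    (Finset.univ.filter (fun p : F × (Fin m → {a : F // a ≠ 0}) =>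
        ∑ j, (p.2 j : F) * (e' j - p.1 * e j) = 0)).card
      ≤ (Fintype.card F - 1) ^ m + Fintype.card F * (Fintype.card F - 1) ^ (m - 1) := by
  classical
  set q := Fintype.card F with hq
  set S := Finset.univ.filter (fun p : F × (Fin m → {a : F // a ≠ 0}) =>
        ∑ j, (p.2 j : F) * (e' j - p.1 * e j) = 0) with hS
  set N : F → ℕ := fun α => (Finset.univ.filter
      (fun ρ : Fin m → {a : F // a ≠ 0} => ∑ j, (ρ j : F) * (e' j - α * e j) = 0)).card
    with hN
  -- Step 1: fiberwise count
  have hsum : S.card = ∑ α : F, N α := by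
    rw [Finset.card_eq_sum_card_fiberwise (f := fun p => p.1) (t := Finset.univ)
      (fun p _ => Finset.mem_univ _)]
    refine Finset.sum_congr rfl (fun α _ => ?_)
    refine Finset.card_bij (fun p _ => p.2) ?_ ?_ ?_
    · intro p hp
      simp only [Finset.mem_filter, S] at hp ⊢
      obtain ⟨⟨_, hps⟩, hpa⟩ := hp
      subst hpa
      exact ⟨Finset.mem_univ _, hps⟩
    · intro p hp p' hp' hsnd
      simp only [Finset.mem_filter] at hp hp'
      exact Prod.ext (hp.2.trans hp'.2.symm) hsnd
    · intro ρ hρ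
      simp only [Finset.mem_filter, N] at hρ
      exact ⟨(α, ρ), by simp [S, hρ.2], rfl⟩
  -- bad keys
  set B := Finset.univ.filter (fun α : F => ∀ j, e' j - α * e j = 0) with hB
  have hBcard : B.card ≤ 1 := by
    by_cases he : ∃ j, e j ≠ 0
    · obtain ⟨j, hj⟩ := he
      refine Finset.card_le_one.mpr (fun α hα α' hα' => ?_)
      simp only [Finset.mem_filter, B] at hα hα'
      have h1 := hα.2 j
      have h2 := hα'.2 j
      have : α * e j = α' * e j := by linear_combination h2 - h1
      exact mul_right_cancel₀ hj this
    · push_neg at he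
      have he' : ∃ j, e' j ≠ 0 := by
        by_contra hc
        push_neg at hc
        exact h ⟨he, hc⟩
      obtain ⟨j, hj⟩ := he'
      have : B = ∅ := by
        refine Finset.eq_empty_of_forall_notMem (fun α hα => ?_)
        simp only [Finset.mem_filter, B] at hα
        have := hα.2 j
        rw [he j] at this
        simp at this
        exact hj this
      simp [this]
  -- pointwise bounds
  have hNall : ∀ α, N α ≤ (q - 1) ^ m := by
    intro α
    calc N α ≤ (Finset.univ : Finset (Fin m → {a : F // a ≠ 0})).card :=
          Finset.card_filter_le _ _
      _ = (q - 1) ^ m := by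
          rw [Finset.card_univ, Fintype.card_fun, Fintype.card_subtype_compl,
            Fintype.card_subtype_eq, Fintype.card_fin]
  have hNgood : ∀ α ∉ B, N α ≤ (q - 1) ^ (m - 1) := by
    intro α hα
    simp only [Finset.mem_filter, Finset.mem_univ, true_and, not_forall, B] at hα
    obtain ⟨j0, hj0⟩ := hα
    exact mac_auxA (fun j => e' j - α * e j) j0 hj0
  -- sum split
  have hsplit : ∑ α : F, N α = ∑ α ∈ B, N α + ∑ α ∈ Bᶜ, N α :=
    (Finset.sum_add_sum_compl B N).symm
  have hb1 : ∑ α ∈ B, N α ≤ (q - 1) ^ m := by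
    calc ∑ α ∈ B, N α ≤ B.card * (q - 1) ^ m :=
          Finset.sum_le_card_nsmul B N _ (fun α _ => hNall α)
      _ ≤ 1 * (q - 1) ^ m := Nat.mul_le_mul_right _ hBcard
      _ = (q - 1) ^ m := one_mul _
  have hb2 : ∑ α ∈ Bᶜ, N α ≤ q * (q - 1) ^ (m - 1) := by
    calc ∑ α ∈ Bᶜ, N α ≤ Bᶜ.card * (q - 1) ^ (m - 1) :=
          Finset.sum_le_card_nsmul Bᶜ N _
            (fun α hα => hNgood α (by simpa using (Finset.mem_compl.mp hα)))
      _ ≤ q * (q - 1) ^ (m - 1) := by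
          refine Nat.mul_le_mul_right _ ?_
          calc Bᶜ.card ≤ (Finset.univ : Finset F).card := Finset.card_le_univ _
            _ = q := Finset.card_univ
  calc S.card = ∑ α : F, N α := hsum
    _ = ∑ α ∈ B, N α + ∑ α ∈ Bᶜ, N α := hsplit
    _ ≤ (q - 1) ^ m + q * (q - 1) ^ (m - 1) := Nat.add_le_add hb1 hb2
end
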